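/- In the random-amplification β-encoder, all iterates remain bounded: for every n ≥ 0 one has 0 ≤ x_n ≤ (β_max − 1)⁻¹. -/

import Mathlib

/-! The interval `[0, κ]`, `κ = (β_max − 1)⁻¹`, is invariant under every step of the encoder,
and it contains `x_0 ≤ 1 ≤ u_1 ≤ κ`. Below the threshold the new iterate is `β y < u ≤ κ`; above
it, it is `β y − 1 ≥ u − 1 ≥ 0` and `β y − 1 ≤ β_max κ − 1 = κ`, because `κ` is the fixed point
of `y ↦ β_max y − 1`. -/

open MeasureTheory Filter Set Real

/-- Orbit of the random-amplification β-encoder: `rIter βs u x n` is the iterate `x_n`,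
where `x_0 = x` and `x_n = βs_n · x_{n-1} − b_n`. -/
noncomputable def rIter (βs u : ℕ → ℝ) (x : ℝ) : ℕ → ℝ
  | 0 => x
  | n + 1 =>
      if βs (n + 1) * rIter βs u x n < u (n + 1) then βs (n + 1) * rIter βs u x n
      else βs (n + 1) * rIter βs u x n - 1

/-- The bit `b_n` produced by the random-amplification β-encoder at step `n ≥ 1`. -/
noncomputable def rBit (βs u : ℕ → ℝ) (x : ℝ) (n : ℕ) : ℝ :=
  if βs n * rIter βs u x (n - 1) < u n then 0 else 1

noncomputable def encoderStep (β u y : ℝ) : ℝ :=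
  if β * y < u then β * y else β * y - 1

theorem rIter_succ (βs u : ℕ → ℝ) (x : ℝ) (n : ℕ) :
    rIter βs u x (n + 1) = encoderStep (βs (n + 1)) (u (n + 1)) (rIter βs u x n) :=
  rfl

theorem encoderStep_mem_Icc {β b u y : ℝ} (hβ : β ∈ Icc 0 b) (hu : u ∈ Icc 1 (b - 1)⁻¹)
    (hy : y ∈ Icc 0 (b - 1)⁻¹) : encoderStep β u y ∈ Icc 0 (b - 1)⁻¹ := by
  have hb : 0 < b - 1 := inv_pos.mp (one_pos.trans_le (hu.1.trans hu.2))
  have hfix : b * (b - 1)⁻¹ - 1 = (b - 1)⁻¹ := by field_simp; ring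
  have hβy : β * y ≤ b * (b - 1)⁻¹ := mul_le_mul hβ.2 hy.2 hy.1 (hβ.1.trans hβ.2)
  unfold encoderStep
  split_ifs with hlt
  · exact ⟨mul_nonneg hβ.1 hy.1, hlt.le.trans hu.2⟩
  · constructor <;> linarith [hu.1]

theorem stmt_11_general (βmin βmax : ℝ) (h1 : 1 < βmin)
    (βs u : ℕ → ℝ)
    (hβs : ∀ n, 1 ≤ n → βs n ∈ Set.Icc βmin βmax)
    (hu : ∀ n, 1 ≤ n → u n ∈ Set.Icc (1:ℝ) (βmax - 1)⁻¹)
    (x : ℝ) (hx : x ∈ Set.Icc (0:ℝ) 1) :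
    ∀ n : ℕ, 0 ≤ rIter βs u x n ∧ rIter βs u x n ≤ (βmax - 1)⁻¹ := by
  intro n
  induction n with
  | zero =>
    obtain ⟨hu₁, hκ⟩ := hu 1 le_rfl
    exact ⟨hx.1, hx.2.trans (hu₁.trans hκ)⟩
  | succ n ih =>
    obtain ⟨hβmin, hβmax⟩ := hβs (n + 1) n.succ_pos
    rw [rIter_succ]
    exact encoderStep_mem_Icc ⟨by linarith, hβmax⟩ (hu (n + 1) n.succ_pos) ih

/-- in the random-amplification β-encoder all iterates remain bounded:
for every `n ≥ 0` one has `0 ≤ x_n ≤ (β_max − 1)⁻¹`. -/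
theorem stmt_11 (βmin βmax : ℝ) (h1 : 1 < βmin) (h2 : βmin ≤ βmax) (h3 : βmax < 2)
    (βs u : ℕ → ℝ)
    (hβs : ∀ n, 1 ≤ n → βs n ∈ Set.Icc βmin βmax)
    (hu : ∀ n, 1 ≤ n → u n ∈ Set.Icc (1:ℝ) (βmax - 1)⁻¹)
    (x : ℝ) (hx : x ∈ Set.Icc (0:ℝ) 1) :
    ∀ n : ℕ, 0 ≤ rIter βs u x n ∧ rIter βs u x n ≤ (βmax - 1)⁻¹ :=
  stmt_11_general βmin βmax h1 βs u hβs hu x hx
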